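/- arXiv:2010.14308 — 4 statements merged into one kernel-verified Lean document; each statement's English description precedes it below -/
import Mathlib

section
/- Let μ > 0, λ ∈ ℝ with λ + 2μ > 0. Then for every symmetric 3×3 matrix S: μ‖S‖² + (λμ/(λ+2μ))·(tr S)² = μ‖dev S‖² + (2μ(2λ+μ)/(3(λ+2μ)))·(tr S)². Consequently, if in addition 2λ + μ > 0, then the quadratic form W(S) = μ‖S‖² + (λμ/(λ+2μ))(tr S)² satisfies c‖S‖² ≤ W(S) ≤ C‖S‖² with c = min{μ, 2μ(2λ+μ)/(λ+2μ)} > 0 and C = max{μ, 2μ(2λ+μ)/(λ+2μ)}, and W is positive definite on Sym(3). -/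
/-!
Splitting `S` into deviatoric and spherical parts is orthogonal,
`‖S‖² = ‖dev S‖² + (tr S)²/3`, and `W` is diagonal in this splitting:
`W(S) = μ ‖dev S‖² + κ (tr S)²/3` with `κ = 2μ(2λ+μ)/(λ+2μ)`. A combination of two
nonnegative parts with coefficients `μ, κ` lies between `min μ κ` and `max μ κ` times their sum.
-/

open Matrix

namespace Matrix

variable {n : Type*} [Fintype n]

theorem trace_mul_transpose_self_nonneg (S : Matrix n n ℝ) : 0 ≤ (S * Sᵀ).trace := by
  simpa [conjTranspose_eq_transpose_of_trivial] using
    (posSemidef_self_mul_conjTranspose S).trace_nonneg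

theorem trace_mul_transpose_self_pos {S : Matrix n n ℝ} (hS : S ≠ 0) :
    0 < (S * Sᵀ).trace := by
  refine (trace_mul_transpose_self_nonneg S).lt_of_ne' ?_
  simpa [conjTranspose_eq_transpose_of_trivial] using
    (trace_mul_conjTranspose_self_eq_zero_iff (A := S)).not.mpr hS

variable [DecidableEq n]

theorem trace_sub_smul_one_mul_transpose (S : Matrix n n ℝ) (c : ℝ) :
    ((S - c • 1) * (S - c • 1)ᵀ).trace =
      (S * Sᵀ).trace - 2 * c * S.trace + Fintype.card n * c ^ 2 := by
  simp only [transpose_sub, transpose_smul, transpose_one, sub_mul, mul_sub, trace_sub,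
    smul_mul_assoc, mul_smul_comm, trace_smul, mul_one, one_mul, trace_transpose, trace_one,
    smul_eq_mul]
  ring

theorem trace_dev_mul_transpose (S : Matrix n n ℝ) :
    ((S - (S.trace / Fintype.card n) • 1) * (S - (S.trace / Fintype.card n) • 1)ᵀ).trace =
      (S * Sᵀ).trace - S.trace ^ 2 / Fintype.card n := by
  rw [trace_sub_smul_one_mul_transpose]
  rcases (Fintype.card n).eq_zero_or_pos with h | h
  · simp [h]
  · field_simp
    ring

end Matrix

section MinMax

variable {α : Type*} [CommRing α] [LinearOrder α] [IsStrictOrderedRing α] {a b x y : α}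

theorem min_mul_add_le_mul_add_mul (hx : 0 ≤ x) (hy : 0 ≤ y) :
    min a b * (x + y) ≤ a * x + b * y := by
  nlinarith [min_le_left a b, min_le_right a b]

theorem mul_add_mul_le_max_mul_add (hx : 0 ≤ x) (hy : 0 ≤ y) :
    a * x + b * y ≤ max a b * (x + y) := by
  nlinarith [le_max_left a b, le_max_right a b]

end MinMax

/-- for Lamé constants `μ > 0`, `λ + 2μ > 0`, the quadratic form
`W(S) = μ‖S‖² + (λμ/(λ+2μ))(tr S)²` on symmetric 3×3 matrices equals
`μ‖dev S‖² + (2μ(2λ+μ)/(3(λ+2μ)))(tr S)²`; if moreover `2λ+μ > 0` then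
`c‖S‖² ≤ W(S) ≤ C‖S‖²` with `c = min{μ, 2μ(2λ+μ)/(λ+2μ)} > 0`,
`C = max{μ, 2μ(2λ+μ)/(λ+2μ)}`, and `W` is positive definite on `Sym(3)`. -/
theorem Wshell_bounds (μ lam : ℝ) (hμ : 0 < μ) (hlam : 0 < lam + 2 * μ) :
    (∀ S : Matrix (Fin 3) (Fin 3) ℝ, S.IsSymm →
      μ * (S * Sᵀ).trace + (lam * μ / (lam + 2 * μ)) * S.trace ^ 2 =
        μ * ((S - (S.trace / 3) • 1) * (S - (S.trace / 3) • 1)ᵀ).trace +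
          (2 * μ * (2 * lam + μ) / (3 * (lam + 2 * μ))) * S.trace ^ 2) ∧
    (0 < 2 * lam + μ →
      (0 < min μ (2 * μ * (2 * lam + μ) / (lam + 2 * μ))) ∧
      ∀ S : Matrix (Fin 3) (Fin 3) ℝ, S.IsSymm →
        (min μ (2 * μ * (2 * lam + μ) / (lam + 2 * μ))) * (S * Sᵀ).trace ≤
            μ * (S * Sᵀ).trace + (lam * μ / (lam + 2 * μ)) * S.trace ^ 2 ∧
        μ * (S * Sᵀ).trace + (lam * μ / (lam + 2 * μ)) * S.trace ^ 2 ≤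
            (max μ (2 * μ * (2 * lam + μ) / (lam + 2 * μ))) * (S * Sᵀ).trace ∧
        (S ≠ 0 →
          0 < μ * (S * Sᵀ).trace + (lam * μ / (lam + 2 * μ)) * S.trace ^ 2)) := by
  set κ := 2 * μ * (2 * lam + μ) / (lam + 2 * μ) with hκ
  have hlam_coeff : lam * μ / (lam + 2 * μ) = (κ - μ) / 3 := by
    have hne : lam + 2 * μ ≠ 0 := hlam.ne'
    rw [hκ, div_sub' hne, div_div, div_eq_div_iff hne (mul_ne_zero hne three_ne_zero)]
    ring
  have hκ_third : 2 * μ * (2 * lam + μ) / (3 * (lam + 2 * μ)) = κ / 3 := by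
    rw [hκ, div_div, mul_comm 3]
  have hsplit (q t : ℝ) : μ * q + (lam * μ / (lam + 2 * μ)) * t ^ 2 =
      μ * (q - t ^ 2 / 3) + κ * (t ^ 2 / 3) := by
    rw [hlam_coeff]
    ring
  have hdev (S : Matrix (Fin 3) (Fin 3) ℝ) :
      ((S - (S.trace / 3) • 1) * (S - (S.trace / 3) • 1)ᵀ).trace =
        (S * Sᵀ).trace - S.trace ^ 2 / 3 := by
    simpa using trace_dev_mul_transpose S
  refine ⟨fun S _ => by rw [hdev, hlam_coeff, hκ_third]; ring, fun hb => ?_⟩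
  have hmin : 0 < min μ κ := lt_min hμ (div_pos (mul_pos (mul_pos two_pos hμ) hb) hlam)
  refine ⟨hmin, fun S _ => ?_⟩
  have hx : 0 ≤ (S * Sᵀ).trace - S.trace ^ 2 / 3 := hdev S ▸ trace_mul_transpose_self_nonneg _
  have hy : 0 ≤ S.trace ^ 2 / 3 := by positivity
  have hlower := min_mul_add_le_mul_add_mul (a := μ) (b := κ) hx hy
  have hupper := mul_add_mul_le_max_mul_add (a := μ) (b := κ) hx hy
  rw [sub_add_cancel, ← hsplit] at hlower hupper
  exact ⟨hlower, hupper,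
    fun hS => (mul_pos hmin (trace_mul_transpose_self_pos hS)).trans_le hlower⟩
end

section
/- Let a, b ∈ ℝ³ be linearly independent, n = (a × b)/‖a × b‖, P = (a | b | n), and let J be the 3×3 matrix with J₁₂ = 1, J₂₁ = -1 and all other entries zero. Define C = det(P)·P⁻ᵀ·J·P⁻¹. Then: (i) C is skew-symmetric; (ii) C² = -(𝟙₃ - n⊗n); and (iii) ‖C‖² = 2 (Frobenius norm). -/
open Matrix

/-- The 3×3 matrix with columns `a`, `b`, `c`. -/
def col3 (a b c : Fin 3 → ℝ) : Matrix (Fin 3) (Fin 3) ℝ :=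
  Matrix.of fun i j => ![a, b, c] j i

/-!
Conjugating the cross-product matrix `[n]ₓ` (with `[n]ₓ v = n × v`) by `P = (a | b | n)` gives
the matrix of triple products `⟨pᵢ, n × pⱼ⟩ = -det P · Jᵢⱼ`, so `C = -[n]ₓ`. The three claims
are then properties of `[n]ₓ` for a unit vector: it is skew, and `[n]ₓ² = n ⊗ n - ‖n‖² 𝟙`
by the expansion `n × (n × v) = ⟨n, v⟩ n - ‖n‖² v`, whose trace is `-2‖n‖²`.
-/

theorem det_col3 (a b c : Fin 3 → ℝ) : (col3 a b c).det = crossProduct a b ⬝ᵥ c := by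
  have hcol3 : col3 a b c = (Matrix.of ![a, b, c])ᵀ := rfl
  rw [hcol3, det_transpose, dotProduct_comm, triple_product_permutation, triple_product_eq_det]
  rfl

theorem Matrix.inv_transpose_mul_mul_inv_of_transpose_mul_mul {n : Type*} [Fintype n]
    [DecidableEq n] {R : Type*} [CommRing R] {P M N : Matrix n n R} (hP : IsUnit P.det)
    (h : Pᵀ * M * P = N) : (P⁻¹)ᵀ * N * P⁻¹ = M := by
  have hPt : IsUnit Pᵀ.det := by rwa [det_transpose]
  rw [← h, transpose_nonsing_inv, Matrix.mul_assoc, Matrix.mul_assoc, mul_nonsing_inv _ hP,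
    Matrix.mul_one, ← Matrix.mul_assoc, nonsing_inv_mul _ hPt, Matrix.one_mul]

section CrossMatrix

variable {R : Type*} [CommRing R]

def crossMatrix (n : Fin 3 → R) : Matrix (Fin 3) (Fin 3) R :=
  !![0, -n 2, n 1; n 2, 0, -n 0; -n 1, n 0, 0]

theorem crossMatrix_mulVec (n v : Fin 3 → R) : crossMatrix n *ᵥ v = crossProduct n v := by
  ext i
  fin_cases i <;> simp [crossMatrix, cross_apply, mulVec, vecHead, vecTail] <;> ring

theorem crossMatrix_transpose (n : Fin 3 → R) : (crossMatrix n)ᵀ = -crossMatrix n := by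
  ext i j
  fin_cases i <;> fin_cases j <;> simp [crossMatrix]

theorem crossMatrix_mul_self (n : Fin 3 → R) :
    crossMatrix n * crossMatrix n = vecMulVec n n - (n ⬝ᵥ n) • 1 := by
  refine ext_iff_mulVec.mpr fun v => ?_
  rw [← mulVec_mulVec, crossMatrix_mulVec, crossMatrix_mulVec, cross_cross_eq_smul_sub_smul',
    sub_mulVec, vecMulVec_mulVec, op_smul_eq_smul, smul_mulVec, one_mulVec]

end CrossMatrix

theorem col3_transpose_mul_crossMatrix_mul_col3 (a b c : Fin 3 → ℝ) :
    (col3 a b c)ᵀ * crossMatrix c * col3 a b c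
      = -(crossProduct a b ⬝ᵥ c) • !![0, 1, 0; -1, 0, 0; 0, 0, 0] := by
  ext i j
  fin_cases i <;> fin_cases j <;>
    simp [col3, crossMatrix, Matrix.mul_apply, Fin.sum_univ_three, cross_apply,
      vecHead, vecTail] <;> ring

theorem dotProduct_self_pos_of_ne_zero {ι R : Type*} [Fintype ι] [Ring R] [LinearOrder R]
    [IsStrictOrderedRing R] {c : ι → R} (hc : c ≠ 0) : 0 < c ⬝ᵥ c :=
  (Finset.sum_nonneg fun i _ => mul_self_nonneg (c i)).lt_of_ne'
    (dotProduct_self_eq_zero.not.mpr hc)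

theorem dotProduct_self_normalize {ι : Type*} [Fintype ι] {c : ι → ℝ} (hc : c ≠ 0) :
    ((√(c ⬝ᵥ c))⁻¹ • c) ⬝ᵥ ((√(c ⬝ᵥ c))⁻¹ • c) = 1 := by
  have hpos := dotProduct_self_pos_of_ne_zero hc
  rw [smul_dotProduct, dotProduct_smul, smul_eq_mul, smul_eq_mul, ← mul_assoc,
    ← mul_inv, Real.mul_self_sqrt hpos.le, inv_mul_cancel₀ hpos.ne']

theorem dotProduct_normalize {ι : Type*} [Fintype ι] (c : ι → ℝ) :
    c ⬝ᵥ ((√(c ⬝ᵥ c))⁻¹ • c) = √(c ⬝ᵥ c) := by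
  rw [dotProduct_smul, smul_eq_mul, inv_mul_eq_div, Real.div_sqrt]

/-- for linearly independent `a, b`, unit normal `n = (a×b)/‖a×b‖`,
`P = (a|b|n)` and `J` with `J₁₂ = 1`, `J₂₁ = -1`, rest zero, the alternator tensor
`C = det(P)·P⁻ᵀ J P⁻¹` is skew-symmetric, satisfies `C² = -(𝟙₃ - n⊗n)`,
and `‖C‖² = tr(C Cᵀ) = 2`. -/
theorem alternator_tensor (a b n : Fin 3 → ℝ) (P C : Matrix (Fin 3) (Fin 3) ℝ)
    (hab : LinearIndependent ℝ ![a, b])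
    (hn : n = (Real.sqrt ((crossProduct a b) ⬝ᵥ (crossProduct a b)))⁻¹ • (crossProduct a b))
    (hP : P = col3 a b n)
    (hC : C = P.det • ((P⁻¹)ᵀ * !![0, 1, 0; -1, 0, 0; 0, 0, 0] * P⁻¹)) :
    Cᵀ = -C ∧
    C * C = -(1 - vecMulVec n n) ∧
    (C * Cᵀ).trace = 2 := by
  set c := crossProduct a b
  have hc : c ≠ 0 := crossProduct_ne_zero_iff_linearIndependent.mpr hab
  have hnn : n ⬝ᵥ n = 1 := hn ▸ dotProduct_self_normalize hc
  have hdet : P.det = √(c ⬝ᵥ c) := by rw [hP, det_col3, hn, dotProduct_normalize]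
  have hdet0 : IsUnit P.det :=
    (hdet ▸ Real.sqrt_pos.mpr (dotProduct_self_pos_of_ne_zero hc)).ne'.isUnit
  have hCn : C = -crossMatrix n := by
    rw [hC, ← Matrix.smul_mul, ← Matrix.mul_smul]
    refine inv_transpose_mul_mul_inv_of_transpose_mul_mul hdet0 ?_
    rw [Matrix.mul_neg, Matrix.neg_mul, hP, col3_transpose_mul_crossMatrix_mul_col3, ← hP,
      hdet, hn, dotProduct_normalize, neg_smul, neg_neg]
  subst hCn
  refine ⟨by rw [transpose_neg, crossMatrix_transpose], ?_, ?_⟩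
  · rw [neg_mul_neg, crossMatrix_mul_self, hnn, one_smul, neg_sub]
  · rw [transpose_neg, crossMatrix_transpose, neg_neg, Matrix.neg_mul, trace_neg,
      crossMatrix_mul_self, trace_sub, trace_vecMulVec, trace_smul, trace_one, hnn]
    norm_num
end

section
/- Let t₁, t₂, n₀ ∈ ℝ³ with ‖n₀‖ = 1, ⟨n₀,t₁⟩ = ⟨n₀,t₂⟩ = 0, and P = (t₁ | t₂ | n₀) invertible. Let m₁, m₂ ∈ ℝ³ and suppose U := (m₁ | m₂ | n₀)·P⁻¹ is symmetric positive definite. Then: (i) U·n₀ = n₀; (ii) P⁻ᵀ·I_m♭·P⁻¹ = (U - n₀⊗n₀)², where I_m♭ = (m₁|m₂|0)ᵀ·(m₁|m₂|0); and (iii) (P⁻ᵀ·Î_m·P⁻¹)^{-1/2} = U⁻¹, where Î_m = (m₁|m₂|n₀)ᵀ·(m₁|m₂|n₀). -/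
open Matrix

open scoped ComplexOrder in
/-- The square root of a positive semidefinite matrix, as defined in the older Mathlib
(`Matrix.PosSemidef.sqrt`, since removed). -/
noncomputable def Matrix.PosSemidef.sqrt {n 𝕜 : Type*} [Fintype n] [RCLike 𝕜] [DecidableEq n]
    {A : Matrix n n 𝕜} (hA : A.PosSemidef) : Matrix n n 𝕜 :=
  hA.1.eigenvectorUnitary.1 * diagonal ((↑) ∘ Real.sqrt ∘ hA.1.eigenvalues) *
    (star hA.1.eigenvectorUnitary : Matrix n n 𝕜)

/-!
With `e₃ = Pi.single 2 1` we have `P e₃ = n₀`, and the orthogonality relations say exactly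
`n₀ᵀ P = e₃ᵀ`; hence `P⁻¹ n₀ = e₃` and `e₃ᵀ P⁻¹ = n₀ᵀ`. The first gives `U n₀ = (m₁|m₂|n₀) e₃ = n₀`,
the second `(m₁|m₂|0) P⁻¹ = U - n₀ ⊗ n₀`. Both transformed fundamental forms are Gram matrices,
`P⁻ᵀ AᵀA P⁻¹ = (A P⁻¹)ᵀ (A P⁻¹)`, so by symmetry of `U` they equal `(U - n₀ ⊗ n₀)²` and `U²`;
the positive semidefinite square root of `U²` is `U` itself.
-/

namespace Matrix

variable {n 𝕜 : Type*} [Fintype n] [DecidableEq n] [RCLike 𝕜]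

open scoped ComplexOrder MatrixOrder in
theorem PosSemidef.sqrt_eq_cfcSqrt {A : Matrix n n 𝕜} (hA : A.PosSemidef) :
    hA.sqrt = CFC.sqrt A := by
  rw [CFC.sqrt_eq_real_sqrt A hA.nonneg, cfcₙ_eq_cfc, hA.isHermitian.cfc_eq]
  rfl

open scoped ComplexOrder MatrixOrder in
theorem PosSemidef.sqrt_eq_of_eq_mul_self {A U : Matrix n n 𝕜} (hA : A.PosSemidef)
    (hU : U.PosSemidef) (h : A = U * U) : hA.sqrt = U := by
  subst h
  rw [hA.sqrt_eq_cfcSqrt, CFC.sqrt_mul_self U hU.nonneg]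

omit [DecidableEq n] in
theorem transpose_mul_transpose_mul_self_mul {m R : Type*} [Fintype m] [CommSemiring R]
    (A : Matrix m n R) (B : Matrix n n R) :
    Bᵀ * (Aᵀ * A) * B = (A * B)ᵀ * (A * B) := by
  rw [transpose_mul]; simp only [Matrix.mul_assoc]

variable {R : Type*} [CommRing R]

theorem inv_mulVec_col {A : Matrix n n R} (hA : IsUnit A.det) (j : n) :
    A⁻¹ *ᵥ A.col j = Pi.single j 1 := by
  rw [← mulVec_single_one, mulVec_mulVec, nonsing_inv_mul A hA, one_mulVec]

theorem vecMul_inv_eq_of_vecMul_eq {A : Matrix n n R} (hA : IsUnit A.det) {v w : n → R}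
    (h : v ᵥ* A = w) : w ᵥ* A⁻¹ = v := by
  rw [← h, vecMul_vecMul, mul_nonsing_inv A hA, vecMul_one]

end Matrix

theorem col3_col_two (a b c : Fin 3 → ℝ) : (col3 a b c).col 2 = c := rfl

theorem vecMul_col3 (v a b c : Fin 3 → ℝ) :
    v ᵥ* col3 a b c = ![v ⬝ᵥ a, v ⬝ᵥ b, v ⬝ᵥ c] := by
  ext j
  fin_cases j <;> simp [col3, vecMul, dotProduct]

theorem col3_zero_eq_col3_sub_vecMulVec (a b c : Fin 3 → ℝ) :
    col3 a b 0 = col3 a b c - vecMulVec c (Pi.single 2 1) := by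
  ext i j
  fin_cases j <;> simp [col3, vecMulVec]

/-- pure elastic stretch leaving the normal unaltered.
If `P = (t₁|t₂|n₀)` is invertible with unit `n₀` orthogonal to `t₁, t₂` and
`U = (m₁|m₂|n₀) P⁻¹` is symmetric positive definite, then `U n₀ = n₀`,
`P⁻ᵀ I_m♭ P⁻¹ = (U - n₀⊗n₀)²`, and `(P⁻ᵀ Î_m P⁻¹)^{-1/2} = U⁻¹`. -/
theorem pure_stretch_fundamental_forms (t₁ t₂ n₀ m₁ m₂ : Fin 3 → ℝ)
    (U : Matrix (Fin 3) (Fin 3) ℝ)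
    (hn : n₀ ⬝ᵥ n₀ = 1) (h1 : n₀ ⬝ᵥ t₁ = 0) (h2 : n₀ ⬝ᵥ t₂ = 0)
    (hP : IsUnit (col3 t₁ t₂ n₀).det)
    (hU : U = col3 m₁ m₂ n₀ * (col3 t₁ t₂ n₀)⁻¹)
    (hUpd : U.PosDef) :
    U.mulVec n₀ = n₀ ∧
    ((col3 t₁ t₂ n₀)⁻¹)ᵀ * ((col3 m₁ m₂ 0)ᵀ * col3 m₁ m₂ 0) * (col3 t₁ t₂ n₀)⁻¹ =
      (U - vecMulVec n₀ n₀) * (U - vecMulVec n₀ n₀) ∧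
    ∀ h : (((col3 t₁ t₂ n₀)⁻¹)ᵀ * ((col3 m₁ m₂ n₀)ᵀ * col3 m₁ m₂ n₀) *
        (col3 t₁ t₂ n₀)⁻¹).PosSemidef,
      (h.sqrt)⁻¹ = U⁻¹ := by
  set P := col3 t₁ t₂ n₀
  have hUsymm : Uᵀ = U := hUpd.isHermitian
  have hPn₀ : P⁻¹ *ᵥ n₀ = Pi.single 2 1 := inv_mulVec_col hP 2
  have hn₀P : Pi.single 2 1 ᵥ* P⁻¹ = n₀ := by
    refine vecMul_inv_eq_of_vecMul_eq hP ?_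
    rw [vecMul_col3, h1, h2, hn]
    ext j; fin_cases j <;> rfl
  refine ⟨?_, ?_, fun h => ?_⟩
  · rw [hU, ← mulVec_mulVec, hPn₀, mulVec_single_one, col3_col_two]
  · have hflat : col3 m₁ m₂ 0 * P⁻¹ = U - vecMulVec n₀ n₀ := by
      rw [col3_zero_eq_col3_sub_vecMulVec _ _ n₀, sub_mul, ← hU, vecMulVec_mul, hn₀P]
    rw [transpose_mul_transpose_mul_self_mul, hflat, transpose_sub, hUsymm,
      transpose_vecMulVec]
  · rw [h.sqrt_eq_of_eq_mul_self hUpd.posSemidef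
      (by rw [transpose_mul_transpose_mul_self_mul, ← hU, hUsymm])]
end

section
/- Under the same pure-elastic-stretch hypotheses (P = (t₁|t₂|n₀) invertible, n₀ unit orthogonal to t₁,t₂, and U := (m₁|m₂|n₀)·P⁻¹ ∈ Sym⁺(3)), and with II_m♭ = -(m₁|m₂|0)ᵀ(ν₁|ν₂|0) and II_{y₀}♭ = -(t₁|t₂|0)ᵀ(ν₁|ν₂|0), the Koiter bending difference satisfies P⁻ᵀ·(II_m♭ - II_{y₀}♭)·P⁻¹ = -(U - 𝟙₃)·(ν₁|ν₂|0)·P⁻¹. In particular, it need not vanish when U ≠ 𝟙₃, so the Koiter bending tensor II_m - II_{y₀} does not satisfy the invariance requirement AR3*. -/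
open Matrix

theorem col3_sub_col3 (a b c a' b' c' : Fin 3 → ℝ) :
    col3 a b c - col3 a' b' c' = col3 (a - a') (b - b') (c - c') := by
  ext i j
  fin_cases j <;> rfl

theorem Matrix.transpose_inv_mul_neg_sub_neg_mul_inv {n R : Type*} [Fintype n] [DecidableEq n]
    [CommRing R] (P A B N : Matrix n n R) :
    (P⁻¹)ᵀ * (-(Bᵀ * N) - -(Aᵀ * N)) * P⁻¹ = -(((B - A) * P⁻¹)ᵀ * (N * P⁻¹)) := by
  rw [transpose_mul, transpose_sub]
  noncomm_ring

theorem koiter_bending_formula_general (t₁ t₂ n₀ m₁ m₂ ν₁ ν₂ : Fin 3 → ℝ)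
    (P U : Matrix (Fin 3) (Fin 3) ℝ)
    (hPdef : P = col3 t₁ t₂ n₀) (hP : IsUnit P.det)
    (hU : U = col3 m₁ m₂ n₀ * P⁻¹) (hUpd : U.PosDef) :
    (P⁻¹)ᵀ * ((-((col3 m₁ m₂ 0)ᵀ * col3 ν₁ ν₂ 0)) -
        (-((col3 t₁ t₂ 0)ᵀ * col3 ν₁ ν₂ 0))) * P⁻¹ =
      -((U - 1) * (col3 ν₁ ν₂ 0 * P⁻¹)) := by
  have hcols : col3 m₁ m₂ 0 - col3 t₁ t₂ 0 = col3 m₁ m₂ n₀ - P := by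
    rw [hPdef, col3_sub_col3, col3_sub_col3, sub_self n₀, sub_zero]
  have hstretch : (col3 m₁ m₂ n₀ - P) * P⁻¹ = U - 1 := by
    rw [sub_mul, ← hU, mul_nonsing_inv P hP]
  have hsymm : Uᵀ = U := by
    simpa only [conjTranspose_eq_transpose_of_trivial] using hUpd.isHermitian.eq
  rw [transpose_inv_mul_neg_sub_neg_mul_inv, hcols, hstretch, transpose_sub, hsymm,
    transpose_one]

/-- for a pure elastic stretch leaving the normal unaltered, the Koiter
bending difference satisfies
`P⁻ᵀ (II_m♭ - II_{y₀}♭) P⁻¹ = -(U - 𝟙₃)·(ν₁|ν₂|0)·P⁻¹`,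
so it need not vanish when `U ≠ 𝟙₃`. -/
theorem koiter_bending_formula (t₁ t₂ n₀ m₁ m₂ ν₁ ν₂ : Fin 3 → ℝ)
    (P U : Matrix (Fin 3) (Fin 3) ℝ)
    (hn : n₀ ⬝ᵥ n₀ = 1) (h1 : n₀ ⬝ᵥ t₁ = 0) (h2 : n₀ ⬝ᵥ t₂ = 0)
    (hPdef : P = col3 t₁ t₂ n₀) (hP : IsUnit P.det)
    (hU : U = col3 m₁ m₂ n₀ * P⁻¹) (hUpd : U.PosDef) :
    (P⁻¹)ᵀ * ((-((col3 m₁ m₂ 0)ᵀ * col3 ν₁ ν₂ 0)) -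
        (-((col3 t₁ t₂ 0)ᵀ * col3 ν₁ ν₂ 0))) * P⁻¹ =
      -((U - 1) * (col3 ν₁ ν₂ 0 * P⁻¹)) :=
  koiter_bending_formula_general t₁ t₂ n₀ m₁ m₂ ν₁ ν₂ P U hPdef hP hU hUpd
end
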